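/- arXiv:2409.06277 — 3 statements merged into one kernel-verified Lean document; each statement's English description precedes it below -/
import Mathlib

section
/- Let V = [v₁ … v_K] ∈ ℝ^{d×K} where each entry is sampled i.i.d. from the standard normal distribution truncated to [-1/√d, 1/√d], and let ρ = 1 - (2ψ(1/√d)/√d)/(2Φ(1/√d) - 1) denote the variance of each entry. Then for any fixed Δ ∈ ℝ^d, the reconstruction Δ̃ = (ρK)^{-1} V Vᵀ Δ is unbiased: E[Δ̃] = Δ. -/
open MeasureTheory ProbabilityTheory Matrix

/-- PDF of the standard normal distribution. -/
noncomputable def stdNormalPDF (x : ℝ) : ℝ := Real.exp (-x ^ 2 / 2) / Real.sqrt (2 * Real.pi)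

/-- CDF of the standard normal distribution. -/
noncomputable def stdNormalCDF (x : ℝ) : ℝ := ∫ t in Set.Iic x, stdNormalPDF t

/-- The standard normal distribution truncated to the interval `[-a, a]`. -/
noncomputable def truncGaussian (a : ℝ) : Measure ℝ :=
  (ENNReal.ofReal (2 * stdNormalCDF a - 1))⁻¹ •
    ((volume.restrict (Set.Icc (-a) a)).withDensity fun x => ENNReal.ofReal (stdNormalPDF x))

/-!
Under the truncated Gaussian an entry has mean `0` and second moment `ρ`: since `ψ' = -x ψ`,
integrating `x ψ` and `x² ψ` over `[-a, a]` by parts leaves only boundary terms, which the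
evenness of `ψ` cancels or turns into `-2 a ψ(a)`. Independence kills the off-diagonal terms of
`E[V Vᵀ]`, so `E[V Vᵀ] = K ρ I`.
-/

open Real Set intervalIntegral

lemma stdNormalPDF_eq_gaussianPDFReal : stdNormalPDF = gaussianPDFReal 0 1 := by
  ext x
  simp [stdNormalPDF, gaussianPDFReal, div_eq_inv_mul]

lemma continuous_stdNormalPDF : Continuous stdNormalPDF := by
  unfold stdNormalPDF
  fun_prop

lemma stdNormalPDF_pos (x : ℝ) : 0 < stdNormalPDF x := by
  unfold stdNormalPDF
  positivity

lemma stdNormalPDF_neg (x : ℝ) : stdNormalPDF (-x) = stdNormalPDF x := by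
  simp [stdNormalPDF]

lemma integrable_stdNormalPDF : Integrable stdNormalPDF :=
  stdNormalPDF_eq_gaussianPDFReal ▸ integrable_gaussianPDFReal 0 1

lemma integral_stdNormalPDF : ∫ x, stdNormalPDF x = 1 :=
  stdNormalPDF_eq_gaussianPDFReal ▸ integral_gaussianPDFReal_eq_one 0 one_ne_zero

lemma hasDerivAt_stdNormalPDF (x : ℝ) : HasDerivAt stdNormalPDF (-x * stdNormalPDF x) x := by
  have h := (((hasDerivAt_pow 2 x).fun_neg.div_const 2).exp).div_const (√(2 * π))
  refine h.congr_deriv ?_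
  simp only [stdNormalPDF]
  ring

lemma stdNormalCDF_neg (a : ℝ) : stdNormalCDF (-a) = 1 - stdNormalCDF a := by
  have h_tail : stdNormalCDF (-a) = ∫ x in Ioi a, stdNormalPDF x := by
    simpa [stdNormalPDF_neg, stdNormalCDF] using integral_comp_neg_Iic (-a) stdNormalPDF
  have h_split := integral_Iic_add_Ioi (b := a) integrable_stdNormalPDF.integrableOn
    integrable_stdNormalPDF.integrableOn
  rw [integral_stdNormalPDF] at h_split
  rw [h_tail, stdNormalCDF]
  linarith

lemma two_mul_stdNormalCDF_sub_one (a : ℝ) :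
    2 * stdNormalCDF a - 1 = ∫ x in -a..a, stdNormalPDF x := by
  rw [← integral_Iic_sub_Iic integrable_stdNormalPDF.integrableOn
    integrable_stdNormalPDF.integrableOn, ← stdNormalCDF, ← stdNormalCDF, stdNormalCDF_neg]
  ring

lemma two_mul_stdNormalCDF_sub_one_pos {a : ℝ} (ha : 0 < a) : 0 < 2 * stdNormalCDF a - 1 := by
  rw [two_mul_stdNormalCDF_sub_one]
  exact intervalIntegral_pos_of_pos (continuous_stdNormalPDF.intervalIntegrable _ _)
    stdNormalPDF_pos (by linarith)

lemma integral_mul_stdNormalPDF_symm (a : ℝ) : ∫ x in -a..a, x * stdNormalPDF x = 0 := by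
  have h_deriv (x : ℝ) : HasDerivAt (fun x => -stdNormalPDF x) (x * stdNormalPDF x) x := by
    simpa using (hasDerivAt_stdNormalPDF x).fun_neg
  rw [integral_eq_sub_of_hasDerivAt (fun x _ => h_deriv x)
    ((continuous_id.mul continuous_stdNormalPDF).intervalIntegrable _ _), stdNormalPDF_neg]
  ring

lemma integral_sq_mul_stdNormalPDF_symm (a : ℝ) :
    ∫ x in -a..a, x ^ 2 * stdNormalPDF x =
      (∫ x in -a..a, stdNormalPDF x) - 2 * a * stdNormalPDF a := by
  have h_deriv (x : ℝ) : HasDerivAt (fun x => -(x * stdNormalPDF x))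
      (x ^ 2 * stdNormalPDF x - stdNormalPDF x) x := by
    refine ((hasDerivAt_id x).fun_mul (hasDerivAt_stdNormalPDF x)).fun_neg.congr_deriv ?_
    simp only [id]
    ring
  have h_int : IntervalIntegrable (fun x => x ^ 2 * stdNormalPDF x) volume (-a) a :=
    ((continuous_pow 2).mul continuous_stdNormalPDF).intervalIntegrable _ _
  have h_ftc := integral_eq_sub_of_hasDerivAt (fun x _ => h_deriv x)
    (h_int.sub (continuous_stdNormalPDF.intervalIntegrable _ _))
  rw [integral_sub h_int (continuous_stdNormalPDF.intervalIntegrable _ _), stdNormalPDF_neg]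
    at h_ftc
  linarith

lemma integral_sq_mul_stdNormalPDF_symm_pos {a : ℝ} (ha : 0 < a) :
    0 < ∫ x in -a..a, x ^ 2 * stdNormalPDF x := by
  have hc : Continuous fun x : ℝ => x ^ 2 * stdNormalPDF x :=
    (continuous_pow 2).mul continuous_stdNormalPDF
  have h_neg : 0 < ∫ x in -a..0, x ^ 2 * stdNormalPDF x :=
    intervalIntegral_pos_of_pos_on (hc.intervalIntegrable _ _)
      (fun x hx => mul_pos (sq_pos_of_neg hx.2) (stdNormalPDF_pos x)) (by linarith)
  have h_pos : 0 < ∫ x in (0 : ℝ)..a, x ^ 2 * stdNormalPDF x :=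
    intervalIntegral_pos_of_pos_on (hc.intervalIntegrable _ _)
      (fun x hx => mul_pos (pow_pos hx.1 2) (stdNormalPDF_pos x)) ha
  rw [← integral_add_adjacent_intervals (hc.intervalIntegrable _ 0) (hc.intervalIntegrable 0 _)]
  exact add_pos h_neg h_pos

section truncGaussian

variable {a : ℝ}

lemma integrable_truncGaussian_of_continuous (ha : 0 < a) {g : ℝ → ℝ} (hg : Continuous g) :
    Integrable g (truncGaussian a) := by
  refine Integrable.smul_measure ?_
    (ENNReal.inv_ne_top.mpr (ENNReal.ofReal_pos.mpr (two_mul_stdNormalCDF_sub_one_pos ha)).ne')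
  rw [integrable_withDensity_iff continuous_stdNormalPDF.measurable.ennreal_ofReal
    (.of_forall fun _ => ENNReal.ofReal_lt_top)]
  refine (hg.mul continuous_stdNormalPDF).integrableOn_Icc.congr_fun (fun x _ => ?_)
    measurableSet_Icc
  rw [Pi.mul_apply, ENNReal.toReal_ofReal (stdNormalPDF_pos x).le]

lemma integral_truncGaussian (ha : 0 < a) (g : ℝ → ℝ) :
    ∫ x, g x ∂truncGaussian a =
      (2 * stdNormalCDF a - 1)⁻¹ * ∫ x in -a..a, g x * stdNormalPDF x := by
  rw [truncGaussian, MeasureTheory.integral_smul_measure, ENNReal.toReal_inv,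
    ENNReal.toReal_ofReal (two_mul_stdNormalCDF_sub_one_pos ha).le, smul_eq_mul,
    integral_withDensity_eq_integral_toReal_smul continuous_stdNormalPDF.measurable.ennreal_ofReal
      (.of_forall fun _ => ENNReal.ofReal_lt_top), integral_Icc_eq_integral_Ioc,
    ← integral_of_le (by linarith)]
  congr 1
  refine integral_congr fun x _ => ?_
  rw [ENNReal.toReal_ofReal (stdNormalPDF_pos x).le, smul_eq_mul, mul_comm]

lemma integral_id_truncGaussian (ha : 0 < a) : ∫ x, x ∂truncGaussian a = 0 := by
  rw [integral_truncGaussian ha, integral_mul_stdNormalPDF_symm, mul_zero]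

lemma integral_sq_truncGaussian (ha : 0 < a) :
    ∫ x, x ^ 2 ∂truncGaussian a = 1 - 2 * a * stdNormalPDF a / (2 * stdNormalCDF a - 1) := by
  have hZ := two_mul_stdNormalCDF_sub_one_pos ha
  rw [integral_truncGaussian ha, integral_sq_mul_stdNormalPDF_symm,
    ← two_mul_stdNormalCDF_sub_one]
  field_simp

lemma integral_sq_truncGaussian_pos (ha : 0 < a) : 0 < ∫ x, x ^ 2 ∂truncGaussian a := by
  rw [integral_truncGaussian ha]
  exact mul_pos (inv_pos.mpr (two_mul_stdNormalCDF_sub_one_pos ha))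
    (integral_sq_mul_stdNormalPDF_symm_pos ha)

end truncGaussian

section RandomMatrix

variable {Ω m n : Type*} [MeasurableSpace Ω] {P : Measure Ω} {V : Ω → Matrix m n ℝ} {s : ℝ}

lemma integral_mul_apply_of_iIndepFun [DecidableEq m]
    (hindep : iIndepFun (fun p : m × n => fun ω => V ω p.1 p.2) P)
    (hmeas : ∀ i k, AEStronglyMeasurable (V · i k) P) (hmean : ∀ i k, ∫ ω, V ω i k ∂P = 0)
    (hsq : ∀ i k, ∫ ω, V ω i k ^ 2 ∂P = s) (i j : m) (k : n) :
    ∫ ω, V ω i k * V ω j k ∂P = if i = j then s else 0 := by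
  split_ifs with hij
  · subst hij
    simpa only [sq] using hsq i k
  · have hindep_ij : IndepFun (V · i k) (V · j k) P :=
      hindep.indepFun (i := (i, k)) (j := (j, k)) (by simp [hij])
    simpa [hmean] using hindep_ij.integral_mul_eq_mul_integral (hmeas i k) (hmeas j k)

variable [Fintype n]

lemma integrable_mul_transpose_apply (hmem : ∀ i k, MemLp (V · i k) 2 P) (i j : m) :
    Integrable (fun ω => (V ω * (V ω)ᵀ) i j) P := by
  simp only [mul_apply, transpose_apply]
  exact integrable_finsetSum _ fun k _ => (hmem i k).integrable_mul (hmem j k)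

lemma integral_mul_transpose_apply [DecidableEq m]
    (hindep : iIndepFun (fun p : m × n => fun ω => V ω p.1 p.2) P)
    (hmem : ∀ i k, MemLp (V · i k) 2 P) (hmean : ∀ i k, ∫ ω, V ω i k ∂P = 0)
    (hsq : ∀ i k, ∫ ω, V ω i k ^ 2 ∂P = s) (i j : m) :
    ∫ ω, (V ω * (V ω)ᵀ) i j ∂P = if i = j then Fintype.card n * s else 0 := by
  simp only [mul_apply, transpose_apply]
  have hint (k : n) : Integrable (fun ω => V ω i k * V ω j k) P :=
    (hmem i k).integrable_mul (hmem j k)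
  rw [integral_finsetSum _ fun k _ => hint k]
  simp_rw [integral_mul_apply_of_iIndepFun hindep (fun i k => (hmem i k).1) hmean hsq]
  split_ifs <;> simp

lemma integral_mul_transpose_mulVec_apply [Fintype m] [DecidableEq m]
    (hindep : iIndepFun (fun p : m × n => fun ω => V ω p.1 p.2) P)
    (hmem : ∀ i k, MemLp (V · i k) 2 P) (hmean : ∀ i k, ∫ ω, V ω i k ∂P = 0)
    (hsq : ∀ i k, ∫ ω, V ω i k ^ 2 ∂P = s) (Δ : m → ℝ) (i : m) :
    ∫ ω, ((V ω * (V ω)ᵀ) *ᵥ Δ) i ∂P = Fintype.card n * s * Δ i := by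
  simp only [mulVec, dotProduct]
  rw [integral_finsetSum _ fun j _ => (integrable_mul_transpose_apply hmem i j).mul_const _]
  simp_rw [MeasureTheory.integral_mul_const, integral_mul_transpose_apply hindep hmem hmean hsq]
  simp

end RandomMatrix

theorem unbiased_reconstruction_general (d K : ℕ) (hd : 0 < d) (hK : 0 < K)
    {Ω : Type*} [MeasurableSpace Ω] (P : Measure Ω)
    (V : Ω → Matrix (Fin d) (Fin K) ℝ) (hmeas : ∀ i k, Measurable fun ω => V ω i k)
    (hindep : iIndepFun
      (fun p : Fin d × Fin K => fun ω => V ω p.1 p.2) P)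
    (hdist : ∀ p : Fin d × Fin K,
      Measure.map (fun ω => V ω p.1 p.2) P = truncGaussian (1 / Real.sqrt d))
    (ρ : ℝ)
    (hρ : ρ = 1 - (2 * stdNormalPDF (1 / Real.sqrt d) / Real.sqrt d) /
        (2 * stdNormalCDF (1 / Real.sqrt d) - 1))
    (Δ : Fin d → ℝ) :
    ∀ i, (∫ ω, ((ρ * K)⁻¹ • ((V ω * (V ω)ᵀ).mulVec Δ)) i ∂P) = Δ i := by
  intro i
  set a := 1 / √(d : ℝ)
  have ha : 0 < a := by positivity
  have hlaw (i : Fin d) (k : Fin K) {g : ℝ → ℝ} (hg : Continuous g) :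
      ∫ ω, g (V ω i k) ∂P = ∫ x, g x ∂truncGaussian a := by
    rw [← hdist (i, k), integral_map (hmeas i k).aemeasurable hg.aestronglyMeasurable]
  have hmem (i : Fin d) (k : Fin K) : MemLp (V · i k) 2 P := by
    have h := integrable_truncGaussian_of_continuous ha (continuous_pow 2)
    rw [← hdist (i, k)] at h
    exact (memLp_two_iff_integrable_sq (hmeas i k).aestronglyMeasurable).mpr
      ((integrable_map_measure h.aestronglyMeasurable (hmeas i k).aemeasurable).mp h)
  have hmean (i : Fin d) (k : Fin K) : ∫ ω, V ω i k ∂P = 0 :=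
    (hlaw i k continuous_id).trans (integral_id_truncGaussian ha)
  have hsq (i : Fin d) (k : Fin K) : ∫ ω, V ω i k ^ 2 ∂P = ρ := by
    refine (hlaw i k (continuous_pow 2)).trans ?_
    rw [integral_sq_truncGaussian ha, hρ]
    ring
  have hρ_pos : 0 < ρ := by
    rw [← hsq i ⟨0, hK⟩]
    exact (hlaw i ⟨0, hK⟩ (continuous_pow 2)).symm ▸ integral_sq_truncGaussian_pos ha
  simp only [Pi.smul_apply, smul_eq_mul]
  rw [MeasureTheory.integral_const_mul,
    integral_mul_transpose_mulVec_apply hindep hmem hmean hsq, Fintype.card_fin]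
  field_simp

theorem unbiased_reconstruction (d K : ℕ) (hd : 0 < d) (hK : 0 < K)
    {Ω : Type*} [MeasurableSpace Ω] (P : Measure Ω) [IsProbabilityMeasure P]
    (V : Ω → Matrix (Fin d) (Fin K) ℝ) (hmeas : ∀ i k, Measurable fun ω => V ω i k)
    (hindep : iIndepFun
      (fun p : Fin d × Fin K => fun ω => V ω p.1 p.2) P)
    (hdist : ∀ p : Fin d × Fin K,
      Measure.map (fun ω => V ω p.1 p.2) P = truncGaussian (1 / Real.sqrt d))
    (ρ : ℝ)
    (hρ : ρ = 1 - (2 * stdNormalPDF (1 / Real.sqrt d) / Real.sqrt d) /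
        (2 * stdNormalCDF (1 / Real.sqrt d) - 1))
    (Δ : Fin d → ℝ) :
    ∀ i, (∫ ω, ((ρ * K)⁻¹ • ((V ω * (V ω)ᵀ).mulVec Δ)) i ∂P) = Δ i :=
  unbiased_reconstruction_general d K hd hK P V hmeas hindep hdist ρ hρ Δ
end

section
/- Let v₁, …, v_K ∈ ℝ^d be i.i.d. random vectors with E[v_k v_kᵀ] = ρ I_d for some ρ ∈ (0,1) and ‖v_k‖ ≤ 1 almost surely, and set V = [v₁ … v_K]. Then for any fixed Δ ∈ ℝ^d, E[‖(ρK)^{-1} V Vᵀ Δ - Δ‖] ≤ (√(2 ln(2d)/(ρK)) + ln(2d)/(ρK)) ‖Δ‖. In particular, E[‖Δ̃ - Δ‖] ≤ max{2√(2 ln(2d)/(ρK)), 2 ln(2d)/(ρK)} ‖Δ‖. -/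
/-! A second-moment computation suffices, with room to spare. Put `X_k = ⟪v_k, Δ⟫ • v_k`, so
that the estimate is `(ρK)⁻¹ ∑ X_k`. Isotropy `E[v vᵀ] = ρ I` gives `E X_k = ρ Δ` and
`E ‖X_k‖² ≤ E ⟪v_k, Δ⟫² = ρ ‖Δ‖²`, hence the error is `(ρK)⁻¹` times the centred sum of the
independent `X_k`. Coordinatewise, variances of independent sums add, so the error has second
moment at most `(ρK)⁻² · Kρ‖Δ‖²`, and by Jensen `E ‖error‖ ≤ ‖Δ‖ / √(ρK)`. Since
`1 ≤ 2 log (2d)`, this is below both stated bounds. -/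

open MeasureTheory ProbabilityTheory Matrix
open scoped RealInnerProductSpace

section

variable {Ω : Type*} [MeasurableSpace Ω] {P : Measure Ω} {n : Type*} [Fintype n]

theorem Matrix.toEuclideanCLM_of_mul_transpose_apply [DecidableEq n] {ι : Type*} [Fintype ι]
    (v : ι → EuclideanSpace ℝ n) (x : EuclideanSpace ℝ n) :
    toEuclideanCLM (𝕜 := ℝ) (of (fun i k => v k i) * (of fun i k => v k i)ᵀ) x =
      ∑ k, ⟪v k, x⟫ • v k := by
  ext i
  simp only [ofLp_toEuclideanCLM, mulVec, dotProduct, mul_apply, transpose_apply, of_apply,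
    WithLp.ofLp_sum, WithLp.ofLp_smul, Finset.sum_apply, Pi.smul_apply, smul_eq_mul,
    PiLp.inner_apply, Finset.sum_mul]
  rw [Finset.sum_comm]
  refine Finset.sum_congr rfl fun k _ => Finset.sum_congr rfl fun j _ => ?_
  simp only [RCLike.inner_apply, conj_trivial]
  ring

theorem integral_inner_mul_inner_of_isotropic [DecidableEq n] {w : Ω → EuclideanSpace ℝ n} {ρ : ℝ}
    (hw : MemLp w 2 P) (hcov : ∀ i j, ∫ ω, w ω i * w ω j ∂P = ρ * (1 : Matrix n n ℝ) i j)
    (a b : EuclideanSpace ℝ n) :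
    ∫ ω, ⟪w ω, a⟫ * ⟪w ω, b⟫ ∂P = ρ * ⟪a, b⟫ := by
  have hcoord : ∀ i, MemLp (fun ω => w ω i) 2 P := fun i =>
    (EuclideanSpace.proj i : EuclideanSpace ℝ n →L[ℝ] ℝ).comp_memLp' hw
  have hexpand : ∀ ω, ⟪w ω, a⟫ * ⟪w ω, b⟫ = ∑ i, ∑ j, a i * b j * (w ω i * w ω j) := by
    intro ω
    simp only [PiLp.inner_apply, RCLike.inner_apply, conj_trivial, Finset.sum_mul_sum]
    exact Finset.sum_congr rfl fun i _ => Finset.sum_congr rfl fun j _ => by ring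
  have hint : ∀ i j, Integrable (fun ω => w ω i * w ω j) P := fun i j =>
    (hcoord i).integrable_mul (hcoord j)
  simp_rw [hexpand]
  rw [integral_finsetSum _ fun i _ => integrable_finsetSum _ fun j _ => (hint i j).const_mul _]
  simp_rw [integral_finsetSum _ fun j _ => (hint _ j).const_mul _, integral_const_mul, hcov,
    one_apply]
  simp [PiLp.inner_apply, Finset.mul_sum, mul_comm]

theorem integral_le_sqrt_integral_sq [IsProbabilityMeasure P] {f : Ω → ℝ} (hf : MemLp f 2 P) :
    ∫ ω, f ω ∂P ≤ √(∫ ω, f ω ^ 2 ∂P) := by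
  have hjensen : (∫ ω, f ω ∂P) ^ 2 ≤ ∫ ω, f ω ^ 2 ∂P := by
    have := variance_nonneg f P
    rw [variance_eq_sub hf] at this
    simpa [sub_nonneg] using this
  exact (le_abs_self _).trans (Real.abs_le_sqrt hjensen)

theorem integral_norm_sum_sub_integral_sq_le [IsProbabilityMeasure P] {ι : Type*} [Fintype ι]
    {Y : ι → Ω → EuclideanSpace ℝ n} (hY : ∀ k, MemLp (Y k) 2 P)
    (hindep : Pairwise fun k l => IndepFun (Y k) (Y l) P) :
    ∫ ω, ‖∑ k, Y k ω - ∫ ω', ∑ k, Y k ω' ∂P‖ ^ 2 ∂P ≤ ∑ k, ∫ ω, ‖Y k ω‖ ^ 2 ∂P := by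
  let π : n → EuclideanSpace ℝ n →L[ℝ] ℝ := fun i => EuclideanSpace.proj i
  have hcoord : ∀ k i, MemLp (fun ω => Y k ω i) 2 P := fun k i => (π i).comp_memLp' (hY k)
  have hsum : ∀ i, MemLp (fun ω => ∑ k, Y k ω i) 2 P := fun i =>
    memLp_finsetSum _ fun k _ => hcoord k i
  have hmean : ∀ i, (∫ ω, ∑ k, Y k ω ∂P) i = ∫ ω, ∑ k, Y k ω i ∂P := fun i => by
    have h := (π i).integral_comp_comm
      (integrable_finsetSum Finset.univ fun k _ => (hY k).integrable one_le_two)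
    simpa [π] using h.symm
  calc ∫ ω, ‖∑ k, Y k ω - ∫ ω', ∑ k, Y k ω' ∂P‖ ^ 2 ∂P
      = ∑ i, ∫ ω, (∑ k, Y k ω i - ∫ ω', ∑ k, Y k ω' i ∂P) ^ 2 ∂P := by
        simp_rw [EuclideanSpace.real_norm_sq_eq, WithLp.ofLp_sub, Pi.sub_apply, WithLp.ofLp_sum, Finset.sum_apply, hmean]
        exact integral_finsetSum _ fun i _ => ((hsum i).sub (memLp_const _)).integrable_sq
    _ = ∑ i, ∑ k, variance (fun ω => Y k ω i) P := by
        refine Finset.sum_congr rfl fun i _ => ?_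
        rw [← IndepFun.variance_sum (fun k _ => hcoord k i)
          (fun k _ l _ hkl => (hindep hkl).comp (π i).measurable (π i).measurable),
          Finset.sum_fn, variance_eq_integral (hsum i).aestronglyMeasurable.aemeasurable]
    _ ≤ ∑ i, ∑ k, ∫ ω, Y k ω i ^ 2 ∂P := by
        gcongr with i _ k _
        exact variance_le_expectation_sq (hcoord k i).aestronglyMeasurable
    _ = ∑ k, ∫ ω, ‖Y k ω‖ ^ 2 ∂P := by
        rw [Finset.sum_comm]
        simp_rw [EuclideanSpace.real_norm_sq_eq]
        refine Finset.sum_congr rfl fun k _ => ?_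
        rw [integral_finsetSum _ fun i _ => (hcoord k i).integrable_sq]

theorem integral_norm_sum_sub_integral_le [IsProbabilityMeasure P] {ι : Type*} [Fintype ι]
    {Y : ι → Ω → EuclideanSpace ℝ n} (hY : ∀ k, MemLp (Y k) 2 P)
    (hindep : Pairwise fun k l => IndepFun (Y k) (Y l) P) :
    ∫ ω, ‖∑ k, Y k ω - ∫ ω', ∑ k, Y k ω' ∂P‖ ∂P ≤ √(∑ k, ∫ ω, ‖Y k ω‖ ^ 2 ∂P) := by
  have hZ : MemLp (fun ω => ∑ k, Y k ω - ∫ ω', ∑ k, Y k ω' ∂P) 2 P :=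
    (memLp_finsetSum _ fun k _ => hY k).sub (memLp_const _)
  calc ∫ ω, ‖∑ k, Y k ω - ∫ ω', ∑ k, Y k ω' ∂P‖ ∂P
      ≤ √(∫ ω, ‖∑ k, Y k ω - ∫ ω', ∑ k, Y k ω' ∂P‖ ^ 2 ∂P) := integral_le_sqrt_integral_sq hZ.norm
    _ ≤ √(∑ k, ∫ ω, ‖Y k ω‖ ^ 2 ∂P) :=
        Real.sqrt_le_sqrt (integral_norm_sum_sub_integral_sq_le hY hindep)

section Isotropic

variable [IsFiniteMeasure P] {w : Ω → EuclideanSpace ℝ n}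

theorem memLp_inner_smul_of_norm_le_one (hw : AEStronglyMeasurable w P)
    (hw1 : ∀ᵐ ω ∂P, ‖w ω‖ ≤ 1) (p : ENNReal) (Δ : EuclideanSpace ℝ n) :
    MemLp (fun ω => ⟪w ω, Δ⟫ • w ω) p P := by
  have hinner : AEStronglyMeasurable (fun ω => ⟪w ω, Δ⟫) P := hw.inner aestronglyMeasurable_const
  refine MemLp.of_bound (hinner.smul hw) ‖Δ‖ ?_
  filter_upwards [hw1] with ω hω
  calc ‖⟪w ω, Δ⟫ • w ω‖ ≤ ‖w ω‖ * ‖Δ‖ * ‖w ω‖ := by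
        rw [norm_smul]
        gcongr
        exact norm_inner_le_norm _ _
    _ ≤ 1 * ‖Δ‖ * 1 := by gcongr
    _ = ‖Δ‖ := by ring

variable [DecidableEq n] {ρ : ℝ}

theorem integral_inner_smul_of_isotropic (hw : AEStronglyMeasurable w P)
    (hw1 : ∀ᵐ ω ∂P, ‖w ω‖ ≤ 1)
    (hcov : ∀ i j, ∫ ω, w ω i * w ω j ∂P = ρ * (1 : Matrix n n ℝ) i j) (Δ : EuclideanSpace ℝ n) :
    ∫ ω, ⟪w ω, Δ⟫ • w ω ∂P = ρ • Δ := by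
  refine ext_inner_left ℝ fun u => ?_
  rw [← integral_inner (𝕜 := ℝ) ((memLp_inner_smul_of_norm_le_one hw hw1 1 Δ).integrable le_rfl)]
  simp only [real_inner_comm _ u, real_inner_smul_left]
  exact integral_inner_mul_inner_of_isotropic (MemLp.of_bound hw 1 hw1) hcov Δ u

theorem integral_norm_inner_smul_sq_le_of_isotropic (hw : AEStronglyMeasurable w P)
    (hw1 : ∀ᵐ ω ∂P, ‖w ω‖ ≤ 1)
    (hcov : ∀ i j, ∫ ω, w ω i * w ω j ∂P = ρ * (1 : Matrix n n ℝ) i j) (Δ : EuclideanSpace ℝ n) :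
    ∫ ω, ‖⟪w ω, Δ⟫ • w ω‖ ^ 2 ∂P ≤ ρ * ‖Δ‖ ^ 2 := by
  have hw2 : MemLp w 2 P := MemLp.of_bound hw 1 hw1
  calc ∫ ω, ‖⟪w ω, Δ⟫ • w ω‖ ^ 2 ∂P ≤ ∫ ω, ⟪w ω, Δ⟫ * ⟪w ω, Δ⟫ ∂P := by
        refine integral_mono_ae
          ((memLp_inner_smul_of_norm_le_one hw hw1 2 Δ).integrable_norm_pow two_ne_zero)
          ((hw2.inner_const Δ).integrable_mul (hw2.inner_const Δ)) ?_
        filter_upwards [hw1] with ω hω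
        have hsq : ‖w ω‖ ^ 2 ≤ 1 := pow_le_one₀ (norm_nonneg _) hω
        rw [norm_smul, mul_pow, Real.norm_eq_abs, sq_abs, ← sq]
        nlinarith [mul_le_mul_of_nonneg_left hsq (sq_nonneg ⟪w ω, Δ⟫)]
    _ = ρ * ‖Δ‖ ^ 2 := by
        rw [integral_inner_mul_inner_of_isotropic hw2 hcov, real_inner_self_eq_norm_sq]

end Isotropic

theorem integral_norm_smul_sum_inner_smul_sub_le [IsProbabilityMeasure P] [DecidableEq n]
    {ι : Type*} [Fintype ι] [Nonempty ι] {v : ι → Ω → EuclideanSpace ℝ n} {ρ : ℝ} (hρ : 0 < ρ)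
    (hmeas : ∀ k, Measurable (v k)) (hindep : Pairwise fun k l => IndepFun (v k) (v l) P)
    (hnorm : ∀ k, ∀ᵐ ω ∂P, ‖v k ω‖ ≤ 1)
    (hcov : ∀ k i j, ∫ ω, v k ω i * v k ω j ∂P = ρ * (1 : Matrix n n ℝ) i j)
    (Δ : EuclideanSpace ℝ n) :
    ∫ ω, ‖(ρ * Fintype.card ι)⁻¹ • ∑ k, ⟪v k ω, Δ⟫ • v k ω - Δ‖ ∂P ≤
      √((ρ * Fintype.card ι)⁻¹) * ‖Δ‖ := by
  set N : ℝ := ρ * Fintype.card ι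
  have hN : 0 < N := mul_pos hρ (by exact_mod_cast Fintype.card_pos)
  set X : ι → Ω → EuclideanSpace ℝ n := fun k ω => ⟪v k ω, Δ⟫ • v k ω
  have hX : ∀ k, MemLp (X k) 2 P := fun k =>
    memLp_inner_smul_of_norm_le_one (hmeas k).aestronglyMeasurable (hnorm k) 2 Δ
  have hφ : Measurable fun x : EuclideanSpace ℝ n => ⟪x, Δ⟫ • x :=
    Continuous.measurable (by fun_prop)
  have hX_indep : Pairwise fun k l => IndepFun (X k) (X l) P := fun k l hkl =>
    (hindep hkl).comp hφ hφ
  have hmean : ∫ ω, ∑ k, X k ω ∂P = N • Δ := by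
    rw [integral_finsetSum _ fun k _ => (hX k).integrable one_le_two]
    simp_rw [X, integral_inner_smul_of_isotropic (hmeas _).aestronglyMeasurable (hnorm _)
      (hcov _) Δ]
    rw [Finset.sum_const, Finset.card_univ, ← Nat.cast_smul_eq_nsmul ℝ, smul_smul, mul_comm]
  have hcentered : ∀ ω, N⁻¹ • ∑ k, X k ω - Δ = N⁻¹ • (∑ k, X k ω - ∫ ω', ∑ k, X k ω' ∂P) := by
    intro ω
    rw [hmean, smul_sub, smul_smul, inv_mul_cancel₀ hN.ne', one_smul]
  calc ∫ ω, ‖N⁻¹ • ∑ k, X k ω - Δ‖ ∂P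
      = N⁻¹ * ∫ ω, ‖∑ k, X k ω - ∫ ω', ∑ k, X k ω' ∂P‖ ∂P := by
        simp_rw [hcentered, norm_smul, Real.norm_of_nonneg (inv_nonneg.2 hN.le)]
        exact integral_const_mul _ _
    _ ≤ N⁻¹ * √(∑ k, ∫ ω, ‖X k ω‖ ^ 2 ∂P) := by
        gcongr
        exact integral_norm_sum_sub_integral_le hX hX_indep
    _ ≤ N⁻¹ * √(N * ‖Δ‖ ^ 2) := by
        gcongr
        calc ∑ k, ∫ ω, ‖X k ω‖ ^ 2 ∂P ≤ ∑ _k : ι, ρ * ‖Δ‖ ^ 2 :=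
              Finset.sum_le_sum fun k _ => integral_norm_inner_smul_sq_le_of_isotropic
                (hmeas k).aestronglyMeasurable (hnorm k) (hcov k) Δ
          _ = N * ‖Δ‖ ^ 2 := by simp [N]; ring
    _ = √N⁻¹ * ‖Δ‖ := by
        rw [Real.sqrt_mul hN.le, Real.sqrt_sq (norm_nonneg _), Real.sqrt_inv, ← mul_assoc]
        congr 1
        rw [← Real.div_sqrt (x := N)]
        field_simp
        exact (Real.sq_sqrt hN.le).symm

end

theorem one_le_two_mul_log_two_mul {x : ℝ} (hx : 1 ≤ x) : 1 ≤ 2 * Real.log (2 * x) := by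
  have h2 : Real.log 2 ≤ Real.log (2 * x) := Real.log_le_log two_pos (by linarith)
  linarith [Real.log_two_gt_d9]

theorem reconstruction_error_bound_general (d K : ℕ) (hd : 0 < d) (hK : 0 < K) (ρ : ℝ)
    (hρ0 : 0 < ρ)
    {Ω : Type*} [MeasurableSpace Ω] (P : Measure Ω) [IsProbabilityMeasure P]
    (v : Fin K → Ω → EuclideanSpace ℝ (Fin d))
    (hmeas : ∀ k i, Measurable fun ω => v k ω i)
    (hindep : iIndepFun v P)
    (hnorm : ∀ k, ∀ᵐ ω ∂P, ‖v k ω‖ ≤ 1)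
    (hcov : ∀ k i j, (∫ ω, v k ω i * v k ω j ∂P) = ρ * (1 : Matrix (Fin d) (Fin d) ℝ) i j)
    (V : Ω → Matrix (Fin d) (Fin K) ℝ) (hV : V = fun ω => Matrix.of fun i k => v k ω i)
    (Δ : EuclideanSpace ℝ (Fin d)) :
    (∫ ω, ‖Matrix.toEuclideanCLM (𝕜 := ℝ) ((ρ * K)⁻¹ • (V ω * (V ω)ᵀ)) Δ - Δ‖ ∂P) ≤
        (Real.sqrt (2 * Real.log (2 * d) / (ρ * K)) + Real.log (2 * d) / (ρ * K)) * ‖Δ‖ ∧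
      (∫ ω, ‖Matrix.toEuclideanCLM (𝕜 := ℝ) ((ρ * K)⁻¹ • (V ω * (V ω)ᵀ)) Δ - Δ‖ ∂P) ≤
        max (2 * Real.sqrt (2 * Real.log (2 * d) / (ρ * K)))
          (2 * Real.log (2 * d) / (ρ * K)) * ‖Δ‖ := by
  have : Nonempty (Fin K) := ⟨⟨0, hK⟩⟩
  have hd1 : (1 : ℝ) ≤ d := by exact_mod_cast hd
  have hρK : 0 < ρ * K := mul_pos hρ0 (by exact_mod_cast hK)
  have hv : ∀ k, Measurable (v k) := fun k =>
    (WithLp.measurable_toLp 2 _).comp (measurable_pi_iff.2 (hmeas k))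
  have hestimate := integral_norm_smul_sum_inner_smul_sub_le hρ0 hv
    (fun k l hkl => hindep.indepFun hkl) hnorm hcov Δ
  rw [Fintype.card_fin] at hestimate
  have hrepr : ∀ ω, toEuclideanCLM (𝕜 := ℝ) ((ρ * K)⁻¹ • (V ω * (V ω)ᵀ)) Δ =
      (ρ * K)⁻¹ • ∑ k, ⟪v k ω, Δ⟫ • v k ω := fun ω => by
    rw [hV, map_smul, _root_.smul_apply]
    exact congrArg _ (toEuclideanCLM_of_mul_transpose_apply (fun k => v k ω) Δ)
  set r := √(2 * Real.log (2 * d) / (ρ * K))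
  have hbound : ∫ ω, ‖toEuclideanCLM (𝕜 := ℝ) ((ρ * K)⁻¹ • (V ω * (V ω)ᵀ)) Δ - Δ‖ ∂P ≤
      r * ‖Δ‖ := by
    simp_rw [hrepr]
    refine hestimate.trans ?_
    gcongr
    refine Real.sqrt_le_sqrt ?_
    rw [div_eq_mul_inv]
    exact le_mul_of_one_le_left (by positivity) (one_le_two_mul_log_two_mul hd1)
  have hlog : 0 ≤ Real.log (2 * d) / (ρ * K) :=
    div_nonneg (Real.log_nonneg (by linarith)) hρK.le
  refine ⟨hbound.trans (by gcongr; linarith), hbound.trans ?_⟩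
  gcongr
  exact le_max_of_le_left (by linarith [Real.sqrt_nonneg (2 * Real.log (2 * d) / (ρ * K))])

theorem reconstruction_error_bound (d K : ℕ) (hd : 0 < d) (hK : 0 < K) (ρ : ℝ)
    (hρ0 : 0 < ρ) (hρ1 : ρ < 1)
    {Ω : Type*} [MeasurableSpace Ω] (P : Measure Ω) [IsProbabilityMeasure P]
    (v : Fin K → Ω → EuclideanSpace ℝ (Fin d))
    (hmeas : ∀ k i, Measurable fun ω => v k ω i)
    (hindep : iIndepFun v P)
    (hident : ∀ k l : Fin K, Measure.map (v k) P = Measure.map (v l) P)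
    (hnorm : ∀ k, ∀ᵐ ω ∂P, ‖v k ω‖ ≤ 1)
    (hcov : ∀ k i j, (∫ ω, v k ω i * v k ω j ∂P) = ρ * (1 : Matrix (Fin d) (Fin d) ℝ) i j)
    (V : Ω → Matrix (Fin d) (Fin K) ℝ) (hV : V = fun ω => Matrix.of fun i k => v k ω i)
    (Δ : EuclideanSpace ℝ (Fin d)) :
    (∫ ω, ‖Matrix.toEuclideanCLM (𝕜 := ℝ) ((ρ * K)⁻¹ • (V ω * (V ω)ᵀ)) Δ - Δ‖ ∂P) ≤
        (Real.sqrt (2 * Real.log (2 * d) / (ρ * K)) + Real.log (2 * d) / (ρ * K)) * ‖Δ‖ ∧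
      (∫ ω, ‖Matrix.toEuclideanCLM (𝕜 := ℝ) ((ρ * K)⁻¹ • (V ω * (V ω)ᵀ)) Δ - Δ‖ ∂P) ≤
        max (2 * Real.sqrt (2 * Real.log (2 * d) / (ρ * K)))
          (2 * Real.log (2 * d) / (ρ * K)) * ‖Δ‖ :=
  reconstruction_error_bound_general d K hd hK ρ hρ0 P v hmeas hindep hnorm hcov V hV Δ
end

section
/- Let ℓ: ℝ^d → ℝ be β-smooth (i.e., its gradient is β-Lipschitz), let w ∈ ℝ^d, ε > 0, and let v₁, …, v_K ∈ ℝ^d satisfy ‖v_k‖ ≤ 1 for all k. Define g_k = (ℓ(w + ε v_k) - ℓ(w))/ε and V = [v₁ … v_K]. Then ‖(1/K) V g - (1/K) V Vᵀ ∇ℓ(w)‖ ≤ (1/2) β ε, where g = (g₁, …, g_K)ᵀ. -/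
open scoped RealInnerProductSpace

/-!
Each `g k` is a forward difference quotient of `ℓ` at `w` in direction `v k`. By β-smoothness it
differs from the directional derivative `⟪v k, ∇ℓ(w)⟫` by at most `β ε ‖v k‖² / 2`: the function
`t ↦ ℓ(w + t h) - ℓ(w) - t ⟪∇ℓ(w), h⟫` vanishes at `0` and its derivative is at most `β t ‖h‖²`,
so it is fenced by the parabola `β t² ‖h‖² / 2`. Averaging `K` vectors of norm at most `β ε / 2`
gives the bound.
-/

section

variable {E : Type*} [NormedAddCommGroup E] [InnerProductSpace ℝ E] [CompleteSpace E]

theorem hasDerivAt_comp_add_smul_gradient {f : E → ℝ} (hf : Differentiable ℝ f) (x h : E) (t : ℝ) :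
    HasDerivAt (fun s : ℝ => f (x + s • h)) ⟪gradient f (x + t • h), h⟫ t := by
  have hline : HasDerivAt (fun s : ℝ => x + s • h) h t := by
    simpa using ((hasDerivAt_id t).smul_const h).const_add x
  simpa [Function.comp_def] using (hf _).hasGradientAt.hasFDerivAt.comp_hasDerivAt t hline

theorem abs_sub_sub_inner_gradient_le {f : E → ℝ} {β : ℝ} (hf : Differentiable ℝ f)
    (hL : ∀ x y, ‖gradient f x - gradient f y‖ ≤ β * ‖x - y‖) (x h : E) :
    |f (x + h) - f x - ⟪gradient f x, h⟫| ≤ β / 2 * ‖h‖ ^ 2 := by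
  set ψ : ℝ → ℝ := fun t => f (x + t • h) - f x - t * ⟪gradient f x, h⟫
  have hψ : ∀ t, HasDerivAt ψ (⟪gradient f (x + t • h), h⟫ - ⟪gradient f x, h⟫) t := fun t =>
    ((hasDerivAt_comp_add_smul_gradient hf x h t).sub_const _).sub
      ((hasDerivAt_id t).mul_const _ |>.congr_deriv (one_mul _))
  have hB : ∀ t : ℝ, HasDerivAt (fun t => β / 2 * t ^ 2 * ‖h‖ ^ 2) (β * t * ‖h‖ ^ 2) t := fun t =>
    (((hasDerivAt_pow 2 t).const_mul (β / 2)).mul_const (‖h‖ ^ 2)).congr_deriv (by push_cast; ring)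
  have hψ' : ∀ t ∈ Set.Ico (0 : ℝ) 1,
      ‖⟪gradient f (x + t • h), h⟫ - ⟪gradient f x, h⟫‖ ≤ β * t * ‖h‖ ^ 2 := by
    rintro t ⟨ht, -⟩
    calc ‖⟪gradient f (x + t • h), h⟫ - ⟪gradient f x, h⟫‖
        = |⟪gradient f (x + t • h) - gradient f x, h⟫| := by rw [inner_sub_left, Real.norm_eq_abs]
      _ ≤ ‖gradient f (x + t • h) - gradient f x‖ * ‖h‖ := abs_real_inner_le_norm _ _
      _ ≤ β * ‖(x + t • h) - x‖ * ‖h‖ := by gcongr; exact hL _ _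
      _ = β * t * ‖h‖ ^ 2 := by
        rw [add_sub_cancel_left, norm_smul, Real.norm_of_nonneg ht]; ring
  have hfence := image_norm_le_of_norm_deriv_right_le_deriv_boundary (a := 0) (b := 1) (f := ψ)
    (fun t _ => (hψ t).continuousAt.continuousWithinAt) (fun t _ => (hψ t).hasDerivWithinAt)
    (by simp [ψ]) hB hψ' (Set.right_mem_Icc.2 zero_le_one)
  simpa [ψ] using hfence

theorem abs_div_sub_inner_gradient_le {f : E → ℝ} {β : ℝ} (hf : Differentiable ℝ f)
    (hL : ∀ x y, ‖gradient f x - gradient f y‖ ≤ β * ‖x - y‖) (x v : E) {ε : ℝ} (hε : ε ≠ 0) :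
    |(f (x + ε • v) - f x) / ε - ⟪v, gradient f x⟫| ≤ β / 2 * |ε| * ‖v‖ ^ 2 := by
  have hquot : (f (x + ε • v) - f x) / ε - ⟪v, gradient f x⟫
      = (f (x + ε • v) - f x - ⟪gradient f x, ε • v⟫) / ε := by
    rw [real_inner_smul_right, real_inner_comm]; field_simp
  rw [hquot, abs_div, div_le_iff₀ (abs_pos.2 hε)]
  calc |f (x + ε • v) - f x - ⟪gradient f x, ε • v⟫|
      ≤ β / 2 * ‖ε • v‖ ^ 2 := abs_sub_sub_inner_gradient_le hf hL x (ε • v)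
    _ = β / 2 * |ε| * ‖v‖ ^ 2 * |ε| := by rw [norm_smul, Real.norm_eq_abs]; ring

end

theorem norm_inv_card_smul_sum_le {ι E : Type*} [Fintype ι] [SeminormedAddCommGroup E]
    [NormedSpace ℝ E] {u : ι → E} {C : ℝ} (hC : 0 ≤ C) (hu : ∀ i, ‖u i‖ ≤ C) :
    ‖(Fintype.card ι : ℝ)⁻¹ • ∑ i, u i‖ ≤ C := by
  rcases isEmpty_or_nonempty ι with hι | hι
  · simpa using hC
  have hcard : (0 : ℝ) < Fintype.card ι := Nat.cast_pos.2 Fintype.card_pos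
  rw [norm_smul, Real.norm_of_nonneg (inv_nonneg.2 hcard.le), inv_mul_le_iff₀ hcard]
  simpa using norm_sum_le_of_le Finset.univ fun i _ => hu i

theorem zeroth_order_reconstruction_error (d K : ℕ) (β ε : ℝ) (hβ : 0 ≤ β) (hε : 0 < ε)
    (ℓ : EuclideanSpace ℝ (Fin d) → ℝ) (hdiff : Differentiable ℝ ℓ)
    (hsmooth : ∀ x y, ‖gradient ℓ x - gradient ℓ y‖ ≤ β * ‖x - y‖)
    (w : EuclideanSpace ℝ (Fin d)) (v : Fin K → EuclideanSpace ℝ (Fin d))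
    (hv : ∀ k, ‖v k‖ ≤ 1) (g : Fin K → ℝ)
    (hg : ∀ k, g k = (ℓ (w + ε • v k) - ℓ w) / ε) :
    ‖((K : ℝ)⁻¹ • ∑ k, g k • v k) -
        (K : ℝ)⁻¹ • ∑ k, ⟪v k, gradient ℓ w⟫ • v k‖ ≤ 1 / 2 * β * ε := by
  have hterm : ∀ k, ‖g k • v k - ⟪v k, gradient ℓ w⟫ • v k‖ ≤ 1 / 2 * β * ε := fun k => by
    have hvk : ‖v k‖ ^ 2 * ‖v k‖ ≤ 1 :=
      mul_le_one₀ (pow_le_one₀ (norm_nonneg _) (hv k)) (norm_nonneg _) (hv k)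
    calc ‖g k • v k - ⟪v k, gradient ℓ w⟫ • v k‖
        = |g k - ⟪v k, gradient ℓ w⟫| * ‖v k‖ := by rw [← sub_smul, norm_smul, Real.norm_eq_abs]
      _ ≤ β / 2 * |ε| * ‖v k‖ ^ 2 * ‖v k‖ := by
        rw [hg k]; gcongr; exact abs_div_sub_inner_gradient_le hdiff hsmooth w (v k) hε.ne'
      _ ≤ β / 2 * ε * 1 := by rw [abs_of_pos hε, mul_assoc]; gcongr
      _ = 1 / 2 * β * ε := by ring
  rw [← smul_sub, ← Finset.sum_sub_distrib]
  simpa only [Fintype.card_fin] using norm_inv_card_smul_sum_le (by positivity) hterm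
end
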